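/- arXiv:1409.3673 — 4 statements merged into one kernel-verified Lean document; each statement's English description precedes it below -/
import Mathlib

section
/- Let λ be a probability vector in ℝⁿ and b an n×n bistochastic matrix, and let μ = λb (i.e. μⱼ = Σᵢ λᵢ b_{ij}). If the Shannon entropies satisfy H(μ) = H(λ), then for every j and all indices i, k with b_{ij} ≠ 0 and b_{kj} ≠ 0 one has λᵢ = λₖ. -/
open Matrix BigOperators ComplexOrder

/-- Entropy function `η(t) = -t log t` (with `η(0)=0` since `Real.log 0 = 0`). -/
noncomputable def eta (t : ℝ) : ℝ := -(t * Real.log t)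

/-- Von Neumann entropy of a matrix: sum of `η` over eigenvalues (0 if not Hermitian). -/
noncomputable def vnEntropy {n : ℕ} (D : Matrix (Fin n) (Fin n) ℂ) : ℝ :=
  if h : D.IsHermitian then ∑ i, eta (h.eigenvalues i) else 0

/-- Positive, unital, trace-preserving linear map on `M_n(ℂ)`. -/
def IsPUTP {n : ℕ} (Φ : Matrix (Fin n) (Fin n) ℂ →ₗ[ℂ] Matrix (Fin n) (Fin n) ℂ) : Prop :=
  (∀ x, x.PosSemidef → (Φ x).PosSemidef) ∧ Φ 1 = 1 ∧ ∀ x, (Φ x).trace = x.trace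

/-- A family of mutually orthogonal rank-one (trace-one) self-adjoint projections
summing to the identity. -/
def IsSpectralFamily {n : ℕ} (e : Fin n → Matrix (Fin n) (Fin n) ℂ) : Prop :=
  (∀ i, (e i).IsHermitian) ∧ (∀ i j, e i * e j = if i = j then e i else 0) ∧
    (∑ i, e i = 1) ∧ (∀ i, (e i).trace = 1)

/-!
Each column `j` of `b` is a probability vector, so concavity of `η` (Jensen) gives
`∑ᵢ bᵢⱼ η(λᵢ) ≤ η(μⱼ)`. Summing over `j` and using that the rows of `b` sum to one, the left-hand
sides add up to `H(λ)` and the right-hand sides to `H(μ)`. Equal entropies therefore force equality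
in every column, and strict concavity of `η` makes `λ` constant on the support of each column.
-/

open Finset

theorem eta_eq_negMulLog : eta = Real.negMulLog := by
  funext t
  simp [eta, Real.negMulLog, neg_mul]

section

variable {ι κ : Type*} [Fintype ι] [Fintype κ]

theorem sum_mul_eta_le_eta_sum_mul {w p : ι → ℝ} (hw0 : ∀ i, 0 ≤ w i) (hw1 : ∑ i, w i = 1)
    (hp : ∀ i, 0 ≤ p i) : ∑ i, w i * eta (p i) ≤ eta (∑ i, w i * p i) := by
  simpa [eta_eq_negMulLog] using
    Real.concaveOn_negMulLog.le_map_sum (t := univ) (fun i _ ↦ hw0 i) hw1 (fun i _ ↦ hp i)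

theorem eq_of_eta_sum_mul_eq_sum_mul_eta {w p : ι → ℝ} (hw0 : ∀ i, 0 ≤ w i)
    (hw1 : ∑ i, w i = 1) (hp : ∀ i, 0 ≤ p i)
    (h : eta (∑ i, w i * p i) = ∑ i, w i * eta (p i)) {i k : ι} (hi : w i ≠ 0) (hk : w k ≠ 0) :
    p i = p k := by
  have hconst := (Real.strictConcaveOn_negMulLog.map_sum_eq_iff' (t := univ)
    (fun i _ ↦ hw0 i) hw1 (fun i _ ↦ hp i)).mp (by simpa [eta_eq_negMulLog] using h)
  rw [hconst i (mem_univ i) hi, hconst k (mem_univ k) hk]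

theorem sum_sum_mul_eta_eq_sum_eta {b : ι → κ → ℝ} (hbrow : ∀ i, ∑ j, b i j = 1) (lam : ι → ℝ) :
    ∑ j, ∑ i, b i j * eta (lam i) = ∑ i, eta (lam i) := by
  rw [sum_comm]
  simp only [← sum_mul, hbrow, one_mul]

theorem eta_sum_mul_eq_sum_mul_eta_of_sum_eta_eq {lam : ι → ℝ} {b : ι → κ → ℝ}
    (hlam0 : ∀ i, 0 ≤ lam i) (hb0 : ∀ i j, 0 ≤ b i j) (hbrow : ∀ i, ∑ j, b i j = 1)
    (hbcol : ∀ j, ∑ i, b i j = 1)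
    (hent : ∑ j, eta (∑ i, b i j * lam i) = ∑ i, eta (lam i)) (j : κ) :
    eta (∑ i, b i j * lam i) = ∑ i, b i j * eta (lam i) := by
  have hjensen : ∀ j, ∑ i, b i j * eta (lam i) ≤ eta (∑ i, b i j * lam i) :=
    fun j ↦ sum_mul_eta_le_eta_sum_mul (hb0 · j) (hbcol j) hlam0
  have hsum : ∑ j, ∑ i, b i j * eta (lam i) = ∑ j, eta (∑ i, b i j * lam i) := by
    rw [sum_sum_mul_eta_eq_sum_eta hbrow, hent]
  exact ((sum_eq_sum_iff_of_le fun j _ ↦ hjensen j).mp hsum j (mem_univ j)).symm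

end

theorem stmt_2_general {n : ℕ} (lam mu : Fin n → ℝ)
    (hlam0 : ∀ i, 0 ≤ lam i)
    (b : Fin n → Fin n → ℝ)
    (hb0 : ∀ i j, 0 ≤ b i j) (hbrow : ∀ i, ∑ j, b i j = 1) (hbcol : ∀ j, ∑ i, b i j = 1)
    (hmu : ∀ j, mu j = ∑ i, lam i * b i j)
    (hent : ∑ j, eta (mu j) = ∑ i, eta (lam i)) :
    ∀ j i k, b i j ≠ 0 → b k j ≠ 0 → lam i = lam k := by
  intro j i k hi hk
  have hmu' : ∀ j, mu j = ∑ i, b i j * lam i := fun j ↦ by simp only [hmu, mul_comm]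
  simp only [hmu'] at hent
  exact eq_of_eta_sum_mul_eq_sum_mul_eta (hb0 · j) (hbcol j) hlam0
    (eta_sum_mul_eq_sum_mul_eta_of_sum_eta_eq hlam0 hb0 hbrow hbcol hent j) hi hk

theorem stmt_2 {n : ℕ} (lam mu : Fin n → ℝ)
    (hlam0 : ∀ i, 0 ≤ lam i) (hlam1 : ∑ i, lam i = 1)
    (b : Fin n → Fin n → ℝ)
    (hb0 : ∀ i j, 0 ≤ b i j) (hbrow : ∀ i, ∑ j, b i j = 1) (hbcol : ∀ j, ∑ i, b i j = 1)
    (hmu : ∀ j, mu j = ∑ i, lam i * b i j)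
    (hent : ∑ j, eta (mu j) = ∑ i, eta (lam i)) :
    ∀ j i k, b i j ≠ 0 → b k j ≠ 0 → lam i = lam k :=
  stmt_2_general lam mu hlam0 b hb0 hbrow hbcol hmu hent
end

section
/- Let λ, μ be probability vectors in ℝⁿ, arranged in decreasing order, and b a bistochastic matrix with λb = μ. If H(μ) = H(λ) (equal Shannon entropies), then also μ bᵀ = λ. -/
/-!
Each `μⱼ = Σᵢ bᵢⱼ λᵢ` is a convex combination of the `λᵢ`, so Jensen's inequality for the strictly
convex `φ(t) = t log t` gives `φ(μⱼ) ≤ Σᵢ bᵢⱼ φ(λᵢ)` for every `j`. Summing over `j` and using the row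
sums, the right-hand sides add up to `Σᵢ φ(λᵢ)`; equal entropies force equality in every one of
these Jensen inequalities, and by strict convexity `λᵢ = μⱼ` whenever `bᵢⱼ ≠ 0`. Hence
`Σⱼ μⱼ bᵢⱼ = λᵢ Σⱼ bᵢⱼ = λᵢ`.
-/

open Matrix BigOperators ComplexOrder

open Finset

section StochasticMatrix

variable {ι κ : Type*} [Fintype κ] {b : ι → κ → ℝ}

lemma sum_mul_eq_of_sum_row_eq_one {i : ι} (hbrow : ∑ j, b i j = 1) {x : ℝ} {y : κ → ℝ}
    (hy : ∀ j, b i j ≠ 0 → y j = x) :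
    ∑ j, y j * b i j = x := by
  have hterm : ∀ j, y j * b i j = x * b i j := fun j => by
    rcases eq_or_ne (b i j) 0 with h | h
    · simp [h]
    · rw [hy j h]
  simp_rw [hterm, ← mul_sum, hbrow, mul_one]

variable [Fintype ι]

lemma sum_sum_mul_eq_sum_of_sum_row_eq_one (hbrow : ∀ i, ∑ j, b i j = 1) (f : ι → ℝ) :
    ∑ j, ∑ i, b i j * f i = ∑ i, f i := by
  rw [sum_comm]
  simp_rw [← sum_mul, hbrow, one_mul]

lemma StrictConvexOn.eq_sum_mul_of_sum_map_eq {s : Set ℝ} {φ : ℝ → ℝ}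
    (hφ : StrictConvexOn ℝ s φ) (hb0 : ∀ i j, 0 ≤ b i j) (hbcol : ∀ j, ∑ i, b i j = 1)
    {x : ι → ℝ} (hx : ∀ i, x i ∈ s)
    (heq : ∑ j, φ (∑ i, b i j * x i) = ∑ j, ∑ i, b i j * φ (x i))
    {i : ι} {j : κ} (hij : b i j ≠ 0) :
    x i = ∑ i, b i j * x i := by
  have hjensen : ∀ j, φ (∑ i, b i j * x i) ≤ ∑ i, b i j * φ (x i) := fun j => by
    simpa only [smul_eq_mul] using
      hφ.convexOn.map_sum_le (fun i _ => hb0 i j) (hbcol j) (fun i _ => hx i)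
  have hcol : φ (∑ i, b i j * x i) = ∑ i, b i j * φ (x i) :=
    (sum_eq_sum_iff_of_le fun j _ => hjensen j).1 heq j (mem_univ j)
  simp only [← smul_eq_mul] at hcol ⊢
  exact (hφ.map_sum_eq_iff' (fun i _ => hb0 i j) (hbcol j) (fun i _ => hx i)).1 hcol i
    (mem_univ i) hij

end StochasticMatrix

theorem stmt_3_general {n : ℕ} (lam mu : Fin n → ℝ)
    (hlam0 : ∀ i, 0 ≤ lam i)
    (b : Fin n → Fin n → ℝ)
    (hb0 : ∀ i j, 0 ≤ b i j) (hbrow : ∀ i, ∑ j, b i j = 1) (hbcol : ∀ j, ∑ i, b i j = 1)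
    (hlb : ∀ j, ∑ i, lam i * b i j = mu j)
    (hent : ∑ j, eta (mu j) = ∑ i, eta (lam i)) :
    ∀ i, ∑ j, mu j * b i j = lam i := by
  have hmu : ∀ j, mu j = ∑ i, b i j * lam i := fun j => by simp_rw [← hlb j, mul_comm]
  have hent' : ∑ j, mu j * Real.log (mu j) = ∑ i, lam i * Real.log (lam i) := by
    simpa only [eta, sum_neg_distrib, neg_inj] using hent
  intro i
  refine sum_mul_eq_of_sum_row_eq_one (hbrow i) fun j hij => ?_
  rw [hmu j]
  refine (Real.strictConvexOn_mul_log.eq_sum_mul_of_sum_map_eq hb0 hbcol hlam0 ?_ hij).symm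
  simpa only [← hmu, sum_sum_mul_eq_sum_of_sum_row_eq_one hbrow] using hent'

theorem stmt_3 {n : ℕ} (lam mu : Fin n → ℝ)
    (hlam0 : ∀ i, 0 ≤ lam i) (hlam1 : ∑ i, lam i = 1)
    (hmu0 : ∀ j, 0 ≤ mu j) (hmu1 : ∑ j, mu j = 1)
    (hlamdec : Antitone lam) (hmudec : Antitone mu)
    (b : Fin n → Fin n → ℝ)
    (hb0 : ∀ i j, 0 ≤ b i j) (hbrow : ∀ i, ∑ j, b i j = 1) (hbcol : ∀ j, ∑ i, b i j = 1)
    (hlb : ∀ j, ∑ i, lam i * b i j = mu j)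
    (hent : ∑ j, eta (mu j) = ∑ i, eta (lam i)) :
    ∀ i, ∑ j, mu j * b i j = lam i :=
  stmt_3_general lam mu hlam0 b hb0 hbrow hbcol hlb hent
end

section
/- Let Φ be a positive unital trace-preserving linear map on M_n(ℂ), Φ* its adjoint with respect to the Hilbert–Schmidt inner product ⟨x,y⟩ = Tr(y*x), and D a density matrix. If Φ(D) = u D u* for some unitary u, then Φ*(Φ(D)) = D. -/
open Matrix BigOperators ComplexOrder

/-!
Put `a = Φ D`. The adjoint `Ψ` is again positive and unital, so Kadison's inequality
`Ψ(a)² ≤ Ψ(a²)`, traced and combined with `tr (Ψ x) = tr x`, gives `tr (Ψ a)² ≤ tr a² = tr D²`,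
the last step because `a` is unitarily conjugate to `D`. By duality also
`tr (D Ψ a) = tr (Φ D a) = tr D²`, so `‖Ψ a - D‖₂² = tr (Ψ a)² - tr D² ≤ 0`.
-/

namespace Matrix

variable {m : Type*} [Fintype m]

theorem PosSemidef.trace_mul_nonneg {A B : Matrix m m ℂ} (hA : A.PosSemidef) (hB : B.PosSemidef) :
    0 ≤ (A * B).trace := by
  classical
  open scoped MatrixOrder in
  obtain ⟨X, rfl⟩ := CStarAlgebra.nonneg_iff_eq_star_mul_self.mp hA.nonneg
  rw [Matrix.mul_assoc, trace_mul_comm, star_eq_conjTranspose]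
  exact (hB.mul_mul_conjTranspose_same X).trace_nonneg

/-- Over `ℂ` no Hermitian hypothesis is needed: a real-valued quadratic form forces `M = Mᴴ`. -/
theorem posSemidef_of_forall_dotProduct_mulVec_nonneg {M : Matrix m m ℂ}
    (h : ∀ v, 0 ≤ star v ⬝ᵥ (M *ᵥ v)) : M.PosSemidef := by
  classical
  rw [← isPositive_toEuclideanLin_iff, LinearMap.isPositive_iff_complex]
  intro x
  have hx := h x.ofLp
  rw [toLpLin_apply, EuclideanSpace.inner_eq_star_dotProduct, WithLp.ofLp_toLp, dotProduct_comm,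
    star_dotProduct, (IsSelfAdjoint.of_nonneg hx).star_eq, RCLike.re_to_complex]
  obtain ⟨hre, him⟩ := Complex.nonneg_iff.mp hx
  exact ⟨Complex.ext rfl (by simp [him]), hre⟩

theorem IsHermitian.exists_sum_smul_posSemidef [DecidableEq m] {A : Matrix m m ℂ}
    (hA : A.IsHermitian) :
    ∃ (c : m → ℝ) (p : m → Matrix m m ℂ), (∀ i, (p i).PosSemidef) ∧ ∑ i, p i = 1 ∧
      A = ∑ i, (c i : ℂ) • p i ∧ A * A = ∑ i, ((c i : ℂ) * c i) • p i := by
  set φ := Unitary.conjStarAlgAut ℂ _ hA.eigenvectorUnitary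
  have hφ (d : m → ℂ) : φ (diagonal d) = ∑ i, d i • φ (single i i 1) := by
    simp only [← sum_single_eq_diagonal, map_sum, ← map_smul, smul_single, smul_eq_mul, mul_one]
  have hsingle (i : m) : (single i i (1 : ℂ)).PosSemidef := by
    rw [← diagonal_single]
    exact posSemidef_diagonal_iff.mpr fun j => by by_cases h : j = i <;> simp [h]
  refine ⟨hA.eigenvalues, fun i => φ (single i i 1), fun i => ?_, ?_, ?_, ?_⟩
  · exact (hsingle i).mul_mul_conjTranspose_same _
  · rw [← map_sum, sum_single_one, map_one]
  · conv_lhs => rw [hA.spectral_theorem]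
    exact hφ _
  · conv_lhs => rw [hA.spectral_theorem, ← map_mul, diagonal_mul_diagonal]
    exact hφ _

/-- Jensen's inequality for the positive operator-valued measure `q`, in trace form. Since
`tr (q i * q j) ≥ 0` and `∑ j, q j = 1`, it reduces to `c i * c j ≤ (c i ^ 2 + c j ^ 2) / 2`. -/
theorem trace_sum_smul_mul_self_le [DecidableEq m] {ι : Type*} [Fintype ι]
    {q : ι → Matrix m m ℂ} (hq : ∀ i, (q i).PosSemidef) (hsum : ∑ i, q i = 1) (c : ι → ℝ) :
    ((∑ i, (c i : ℂ) • q i) * ∑ i, (c i : ℂ) • q i).trace ≤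
      ∑ i, ((c i : ℂ) * c i) * (q i).trace := by
  set t : ι → ι → ℂ := fun i j => (q i * q j).trace
  have htrace (i : ι) : (q i).trace = ∑ j, t i j := by
    rw [← trace_sum, ← Finset.mul_sum, hsum, Matrix.mul_one]
  have hsymm : ∑ i, ∑ j, ((c j : ℂ) * c j) * t i j = ∑ i, ∑ j, ((c i : ℂ) * c i) * t i j := by
    rw [Finset.sum_comm]
    exact Finset.sum_congr rfl fun i _ => Finset.sum_congr rfl fun j _ => by
      rw [show t j i = t i j from trace_mul_comm _ _]
  calc ((∑ i, (c i : ℂ) • q i) * ∑ i, (c i : ℂ) • q i).trace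
      = ∑ i, ∑ j, ((c i : ℂ) * c j) * t i j := by
        simp only [Finset.sum_mul_sum, trace_sum, smul_mul_smul_comm, trace_smul, smul_eq_mul, t]
    _ ≤ ∑ i, ∑ j, (((c i : ℂ) * c i + (c j : ℂ) * c j) / 2) * t i j := by
        gcongr with i _ j _
        · exact (hq i).trace_mul_nonneg (hq j)
        · exact_mod_cast (by nlinarith [sq_nonneg (c i - c j)] :
            c i * c j ≤ (c i * c i + c j * c j) / 2)
    _ = ∑ i, ((c i : ℂ) * c i) * (q i).trace := by
        simp only [htrace, Finset.mul_sum, add_div, add_mul, Finset.sum_add_distrib,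
          div_mul_eq_mul_div, ← Finset.sum_div, hsymm, add_halves]

theorem IsHermitian.eq_of_trace_mul_self_le {X Y : Matrix m m ℂ} (hX : X.IsHermitian)
    (hY : Y.IsHermitian) (hle : (X * X).trace ≤ (Y * Y).trace)
    (hYX : (Y * X).trace = (Y * Y).trace) : X = Y := by
  have hnorm : ((X - Y)ᴴ * (X - Y)).trace = (X * X).trace - (Y * Y).trace := by
    rw [conjTranspose_sub, hX.eq, hY.eq, sub_mul, mul_sub, mul_sub, trace_sub, trace_sub,
      trace_sub, trace_mul_comm X Y, hYX]
    ring
  rw [← sub_eq_zero, ← trace_conjTranspose_mul_self_eq_zero_iff]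
  exact le_antisymm (hnorm ▸ sub_nonpos.mpr hle)
    (posSemidef_conjTranspose_mul_self _).trace_nonneg

section PositiveMap

variable [DecidableEq m] {Ψ : Matrix m m ℂ →ₗ[ℂ] Matrix m m ℂ}
  (hpos : ∀ x, x.PosSemidef → (Ψ x).PosSemidef)
include hpos

theorem IsHermitian.map_of_posSemidef {A : Matrix m m ℂ} (hA : A.IsHermitian) :
    (Ψ A).IsHermitian := by
  obtain ⟨c, p, hp, -, rfl, -⟩ := hA.exists_sum_smul_posSemidef
  simp only [IsHermitian, map_sum, map_smul, conjTranspose_sum, conjTranspose_smul,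
    Complex.star_def, Complex.conj_ofReal, (hpos _ (hp _)).isHermitian.eq]

/-- Kadison's inequality `Ψ(A)² ≤ Ψ(A²)` for positive unital maps, after taking traces. -/
theorem IsHermitian.trace_map_mul_self_le (hunit : Ψ 1 = 1) {A : Matrix m m ℂ}
    (hA : A.IsHermitian) : (Ψ A * Ψ A).trace ≤ (Ψ (A * A)).trace := by
  obtain ⟨c, p, hp, hsum, rfl, hsq⟩ := hA.exists_sum_smul_posSemidef
  rw [hsq]
  simp only [map_sum, map_smul, trace_sum, trace_smul, smul_eq_mul]
  exact trace_sum_smul_mul_self_le (fun i => hpos _ (hp i)) (by rw [← map_sum, hsum, hunit]) c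

end PositiveMap

section TraceAdjoint

variable {Φ Ψ : Matrix m m ℂ →ₗ[ℂ] Matrix m m ℂ}
  (hadj : ∀ x y : Matrix m m ℂ, (y * Ψ x).trace = (Φ y * x).trace)
include hadj

theorem map_one_of_trace_adjoint [DecidableEq m] (htr : ∀ x, (Φ x).trace = x.trace) :
    Ψ 1 = 1 :=
  ext_iff_trace_mul_left.mpr fun y => by rw [hadj, Matrix.mul_one, Matrix.mul_one, htr]

theorem trace_map_of_trace_adjoint [DecidableEq m] (hunit : Φ 1 = 1) (x : Matrix m m ℂ) :
    (Ψ x).trace = x.trace := by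
  simpa [hunit] using hadj x 1

theorem posSemidef_map_of_trace_adjoint (hpos : ∀ x, x.PosSemidef → (Φ x).PosSemidef)
    {x : Matrix m m ℂ} (hx : x.PosSemidef) : (Ψ x).PosSemidef :=
  posSemidef_of_forall_dotProduct_mulVec_nonneg fun v => by
    rw [dotProduct_comm, ← trace_vecMulVec, ← mul_vecMulVec, trace_mul_comm, hadj]
    exact (hpos _ (posSemidef_vecMulVec_self_star v)).trace_mul_nonneg hx

end TraceAdjoint

end Matrix

theorem stmt_6_general {n : ℕ} (Φ Ψ : Matrix (Fin n) (Fin n) ℂ →ₗ[ℂ] Matrix (Fin n) (Fin n) ℂ)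
    (hΦ : IsPUTP Φ)
    (hadj : ∀ x y : Matrix (Fin n) (Fin n) ℂ, (y * Ψ x).trace = (Φ y * x).trace)
    (D : Matrix (Fin n) (Fin n) ℂ) (hD : D.PosSemidef)
    (u : Matrix (Fin n) (Fin n) ℂ) (hu2 : star u * u = 1)
    (hΦD : Φ D = u * D * star u) :
    Ψ (Φ D) = D := by
  obtain ⟨hpos, hunit, htr⟩ := hΦ
  have hΨpos : ∀ x, x.PosSemidef → (Ψ x).PosSemidef := fun _ =>
    posSemidef_map_of_trace_adjoint hadj hpos
  have ha : (Φ D).IsHermitian := (hpos D hD).isHermitian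
  have hsq : (Φ D * Φ D).trace = (D * D).trace := by
    rw [hΦD, show u * D * star u * (u * D * star u) = u * (D * D) * star u by
      simp only [Matrix.mul_assoc, ← Matrix.mul_assoc (star u) u, hu2, Matrix.one_mul],
      trace_mul_cycle, hu2, Matrix.one_mul]
  refine (ha.map_of_posSemidef hΨpos).eq_of_trace_mul_self_le hD.isHermitian ?_ (by rw [hadj, hsq])
  calc (Ψ (Φ D) * Ψ (Φ D)).trace
      ≤ (Ψ (Φ D * Φ D)).trace := ha.trace_map_mul_self_le hΨpos (map_one_of_trace_adjoint hadj htr)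
    _ = (D * D).trace := by rw [trace_map_of_trace_adjoint hadj hunit, hsq]

theorem stmt_6 {n : ℕ} (Φ Ψ : Matrix (Fin n) (Fin n) ℂ →ₗ[ℂ] Matrix (Fin n) (Fin n) ℂ)
    (hΦ : IsPUTP Φ)
    (hadj : ∀ x y : Matrix (Fin n) (Fin n) ℂ, (y * Ψ x).trace = (Φ y * x).trace)
    (D : Matrix (Fin n) (Fin n) ℂ) (hD : D.PosSemidef) (htr : D.trace = 1)
    (u : Matrix (Fin n) (Fin n) ℂ) (hu1 : u * star u = 1) (hu2 : star u * u = 1)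
    (hΦD : Φ D = u * D * star u) :
    Ψ (Φ D) = D :=
  stmt_6_general Φ Ψ hΦ hadj D hD u hu2 hΦD
end

section
/- With the notation of the paper, H^λ(b_ρ(Φ)) = S(Φ(D_ρ)) if and only if b_{ij} = μⱼ for every j and every i with λᵢ ≠ 0. -/
open Matrix BigOperators ComplexOrder

/-
Testing `D` against the `e i` and `Φ D` against the `p j` shows that `lam` is a probability
vector, that `b` has nonnegative entries and that `mu j = ∑ i, lam i * b i j`.
Since `p` is a complete family of orthogonal trace-one projections, `Φ D = ∑ j, mu j • p j` has
the same power traces `tr (Φ D)^k` as `diagonal mu`; on a finite set every function agrees with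
a polynomial, so `vnEntropy (Φ D) = ∑ j, eta (mu j)`. The claim is then, column by column, the
equality case of Jensen's inequality `∑ i, lam i * eta (b i j) ≤ eta (mu j)` for the strictly
concave `eta`.
-/

open Polynomial

namespace CompleteOrthogonalIdempotents

variable {R A ι : Type*} [CommSemiring R] [Semiring A] [Algebra R A] [Fintype ι]
  {e : ι → A}

lemma sum_smul_pow (he : CompleteOrthogonalIdempotents e) (c : ι → R) (k : ℕ) :
    (∑ i, c i • e i) ^ k = ∑ i, c i ^ k • e i := by
  induction k with
  | zero => simpa using he.complete.symm
  | succ k ih =>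
    rw [pow_succ, ih, Finset.sum_mul]
    refine Finset.sum_congr rfl fun i _ => ?_
    rw [smul_mul_assoc, Finset.mul_sum, Finset.sum_eq_single i]
    · rw [mul_smul_comm, (he.idem i).eq, smul_smul, pow_succ]
    · intro j _ hji
      rw [mul_smul_comm, he.ortho hji.symm, smul_zero]
    · simp

lemma aeval_sum_smul (he : CompleteOrthogonalIdempotents e) (c : ι → R) (q : R[X]) :
    aeval (∑ i, c i • e i) q = ∑ i, q.eval (c i) • e i := by
  simp_rw [aeval_eq_sum_range, he.sum_smul_pow, Finset.smul_sum, smul_smul, eval_eq_sum_range,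
    Finset.sum_smul]
  exact Finset.sum_comm

end CompleteOrthogonalIdempotents

lemma Matrix.IsHermitian.trace_aeval {𝕜 n : Type*} [RCLike 𝕜] [Fintype n] [DecidableEq n]
    {A : Matrix n n 𝕜} (hA : A.IsHermitian) (q : 𝕜[X]) :
    (aeval A q).trace = ∑ i, q.eval (hA.eigenvalues i : 𝕜) := by
  conv_lhs => rw [hA.spectral_theorem]
  rw [aeval_algHom_apply, Unitary.conjStarAlgAut_apply, trace_mul_cycle,
    Unitary.coe_star_mul_self, one_mul, ← diagonalAlgHom_apply 𝕜, aeval_algHom_apply,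
    aeval_pi_apply]
  simp [trace_diagonal, aeval_def, eval₂_eq_eval_map]

lemma Finset.sum_eq_sum_of_forall_sum_eval_eq {K ι κ : Type*} [Field K] [Fintype ι] [Fintype κ]
    {x : ι → K} {y : κ → K} (h : ∀ q : K[X], ∑ i, q.eval (x i) = ∑ j, q.eval (y j))
    (f : K → K) : ∑ i, f (x i) = ∑ j, f (y j) := by
  classical
  set s := Finset.univ.image x ∪ Finset.univ.image y
  have hq : ∀ z ∈ s, (Lagrange.interpolate s id f).eval z = f z := fun z hz =>
    Lagrange.eval_interpolate_at_node f (Set.injOn_id _) hz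
  convert h (Lagrange.interpolate s id f) using 1
  · exact Finset.sum_congr rfl fun i _ => (hq _ (by simp [s])).symm
  · exact Finset.sum_congr rfl fun j _ => (hq _ (by simp [s])).symm

section StarProjection

variable {𝕜 n : Type*} [RCLike 𝕜] [Fintype n] {q : Matrix n n 𝕜}

lemma IsStarProjection.eq_conjTranspose_mul_self (hq : IsStarProjection q) : q = qᴴ * q := by
  rw [hq.isSelfAdjoint.isHermitian.eq, hq.isIdempotentElem.eq]

lemma IsStarProjection.posSemidef (hq : IsStarProjection q) : q.PosSemidef :=
  hq.eq_conjTranspose_mul_self ▸ posSemidef_conjTranspose_mul_self q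

lemma Matrix.PosSemidef.trace_mul_nonneg_of_isStarProjection {X : Matrix n n 𝕜}
    (hX : X.PosSemidef) (hq : IsStarProjection q) : 0 ≤ (X * q).trace := by
  rw [hq.eq_conjTranspose_mul_self, ← mul_assoc, trace_mul_cycle]
  exact (hX.mul_mul_conjTranspose_same q).trace_nonneg

end StarProjection

namespace IsSpectralFamily

variable {n : ℕ} {e : Fin n → Matrix (Fin n) (Fin n) ℂ}

lemma completeOrthogonalIdempotents (he : IsSpectralFamily e) :
    CompleteOrthogonalIdempotents e :=
  ⟨⟨fun i => show e i * e i = e i by simpa using he.2.1 i i,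
    fun i j hij => by simpa [hij] using he.2.1 i j⟩, he.2.2.1⟩

lemma isStarProjection (he : IsSpectralFamily e) (i : Fin n) : IsStarProjection (e i) :=
  ⟨he.completeOrthogonalIdempotents.idem i, he.1 i⟩

lemma trace_sum_smul (he : IsSpectralFamily e) (c : Fin n → ℂ) :
    (∑ i, c i • e i).trace = ∑ i, c i := by
  simp [trace_sum, he.2.2.2]

lemma trace_sum_smul_mul (he : IsSpectralFamily e) (c : Fin n → ℂ) (j : Fin n) :
    ((∑ i, c i • e i) * e j).trace = c j := by
  simp [Finset.sum_mul, he.2.1, he.2.2.2]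

lemma isHermitian_sum_smul (he : IsSpectralFamily e) (c : Fin n → ℝ) :
    (∑ i, (c i : ℂ) • e i).IsHermitian :=
  isSelfAdjoint_sum _ fun i _ => (he.1 i).smul (Complex.conj_ofReal (c i))

lemma vnEntropy_sum_smul (he : IsSpectralFamily e) (c : Fin n → ℝ) :
    vnEntropy (∑ i, (c i : ℂ) • e i) = ∑ i, eta (c i) := by
  have hA := he.isHermitian_sum_smul c
  have htrace (q : ℂ[X]) := (hA.trace_aeval q).symm.trans <| by
    rw [he.completeOrthogonalIdempotents.aeval_sum_smul, he.trace_sum_smul]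
  have := Finset.sum_eq_sum_of_forall_sum_eval_eq htrace fun z => (eta z.re : ℂ)
  rw [vnEntropy, dif_pos hA]
  exact_mod_cast this

end IsSpectralFamily

lemma StrictConcaveOn.sum_mul_sum_eq_sum_map_iff {ι κ : Type*} [Fintype ι] [Fintype κ]
    {s : Set ℝ} {f : ℝ → ℝ} (hf : StrictConcaveOn ℝ s f) {w : ι → ℝ} (hw₀ : ∀ i, 0 ≤ w i)
    (hw₁ : ∑ i, w i = 1) {x : ι → κ → ℝ} (hx : ∀ i j, x i j ∈ s) :
    ∑ i, w i * ∑ j, f (x i j) = ∑ j, f (∑ i, w i * x i j) ↔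
      ∀ i j, w i ≠ 0 → x i j = ∑ i', w i' * x i' j := by
  have hle (j : κ) : ∑ i, w i * f (x i j) ≤ f (∑ i, w i * x i j) :=
    hf.concaveOn.le_map_sum (fun i _ => hw₀ i) hw₁ (fun i _ => hx i j)
  have heq (j : κ) : ∑ i, w i * f (x i j) = f (∑ i, w i * x i j) ↔
      ∀ i, w i ≠ 0 → x i j = ∑ i', w i' * x i' j := by
    simpa [eq_comm] using hf.map_sum_eq_iff' (fun i _ => hw₀ i) hw₁ (fun i _ => hx i j)
  simp_rw [Finset.mul_sum]
  rw [Finset.sum_comm, Finset.sum_eq_sum_iff_of_le fun j _ => hle j]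
  simp only [Finset.mem_univ, true_implies, heq]
  exact forall_comm

lemma strictConcaveOn_eta : StrictConcaveOn ℝ (Set.Ici 0) eta := by
  convert Real.strictConcaveOn_negMulLog using 1
  ext t
  simp [_root_.eta, Real.negMulLog]

theorem stmt_15 {n : ℕ} (Φ : Matrix (Fin n) (Fin n) ℂ →ₗ[ℂ] Matrix (Fin n) (Fin n) ℂ)
    (hΦ : IsPUTP Φ)
    (D : Matrix (Fin n) (Fin n) ℂ) (hD : D.PosSemidef) (htr : D.trace = 1)
    (lam mu : Fin n → ℝ) (e p : Fin n → Matrix (Fin n) (Fin n) ℂ)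
    (he : IsSpectralFamily e) (hp : IsSpectralFamily p)
    (hDdec : D = ∑ i, (lam i : ℂ) • e i)
    (hΦDdec : Φ D = ∑ j, (mu j : ℂ) • p j)
    (b : Fin n → Fin n → ℝ)
    (hb : ∀ i j, (b i j : ℂ) = (Φ (e i) * p j).trace) :
    (∑ i, lam i * ∑ j, eta (b i j)) = vnEntropy (Φ D) ↔
      ∀ i j, lam i ≠ 0 → b i j = mu j := by
  have hlam_nonneg (i : Fin n) : 0 ≤ lam i := by
    have := hD.trace_mul_nonneg_of_isStarProjection (he.isStarProjection i)
    rwa [hDdec, he.trace_sum_smul_mul, Complex.zero_le_real] at this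
  have hlam_sum : ∑ i, lam i = 1 := by
    rw [hDdec, he.trace_sum_smul] at htr
    exact_mod_cast htr
  have hb_nonneg (i j : Fin n) : 0 ≤ b i j := by
    have := (hΦ.1 _ (he.isStarProjection i).posSemidef).trace_mul_nonneg_of_isStarProjection
      (hp.isStarProjection j)
    rwa [← hb, Complex.zero_le_real] at this
  have hmu (j : Fin n) : mu j = ∑ i, lam i * b i j := by
    have := hp.trace_sum_smul_mul (fun j => (mu j : ℂ)) j
    rw [← hΦDdec, hDdec, map_sum, Finset.sum_mul, trace_sum] at this
    simp_rw [map_smul, smul_mul_assoc, trace_smul, ← hb, smul_eq_mul] at this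
    exact_mod_cast this.symm
  rw [hΦDdec, hp.vnEntropy_sum_smul]
  simp_rw [hmu]
  exact strictConcaveOn_eta.sum_mul_sum_eq_sum_map_iff hlam_nonneg hlam_sum hb_nonneg
end
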